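/- arXiv:1211.6151 — 6 statements merged into one kernel-verified Lean document; each statement's English description precedes it below -/
import Mathlib

section
/- Assume a satisfies the weakly degenerate (WD) hypothesis with degeneracy point x0 and constant K ∈ (0,1). Then the function 1/a is Lebesgue integrable on (0,1). -/
open MeasureTheory Set Filter

noncomputable section

/-- Absolute continuity of `f` on the interval `[a,b]`. -/
def ACOn (f : ℝ → ℝ) (a b : ℝ) : Prop :=
  ∀ ε > (0:ℝ), ∃ δ > (0:ℝ), ∀ n : ℕ, ∀ c d : Fin n → ℝ,
    (∀ i, a ≤ c i ∧ c i ≤ d i ∧ d i ≤ b) →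
    (∀ i j, i ≠ j → Set.Ioo (c i) (d i) ∩ Set.Ioo (c j) (d j) = ∅) →
    (∑ i, (d i - c i)) < δ → (∑ i, |f (d i) - f (c i)|) < ε

/-- Local absolute continuity on `[0, x0) ∪ (x0, 1]`, i.e. absolute continuity on every
compact subinterval of `[0,1]` avoiding `x0`. -/
def LocACOff (f : ℝ → ℝ) (x0 : ℝ) : Prop :=
  ∀ c d : ℝ, 0 ≤ c → c ≤ d → d ≤ 1 → x0 ∉ Set.Icc c d → ACOn f c d

/-- The weakly degenerate hypothesis (WD). -/
structure WeaklyDegenerate (a : ℝ → ℝ) (x0 K : ℝ) : Prop where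
  x0_mem : x0 ∈ Set.Ioo (0:ℝ) 1
  a_zero : a x0 = 0
  a_pos : ∀ x ∈ Set.Icc (0:ℝ) 1, x ≠ x0 → 0 < a x
  a_diff : ∀ x ∈ Set.Icc (0:ℝ) 1, x ≠ x0 → DifferentiableAt ℝ a x
  deriv_cont : ContinuousOn (deriv a) (Set.Icc 0 1 \ {x0})
  K_mem : K ∈ Set.Ioo (0:ℝ) 1
  ineq : ∀ x ∈ Set.Icc (0:ℝ) 1, x ≠ x0 → (x - x0) * deriv a x ≤ K * a x

/-- The strongly degenerate hypothesis (SD); membership in `W^{1,∞}(0,1)` is encoded as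
Lipschitz continuity on `[0,1]`. -/
structure StronglyDegenerate (a : ℝ → ℝ) (x0 K : ℝ) : Prop where
  x0_mem : x0 ∈ Set.Ioo (0:ℝ) 1
  a_zero : a x0 = 0
  a_pos : ∀ x ∈ Set.Icc (0:ℝ) 1, x ≠ x0 → 0 < a x
  a_diff : ∀ x ∈ Set.Icc (0:ℝ) 1, x ≠ x0 → DifferentiableAt ℝ a x
  deriv_cont : ContinuousOn (deriv a) (Set.Icc 0 1 \ {x0})
  lipschitz : ∃ L : NNReal, LipschitzOnWith L a (Set.Icc 0 1)
  K_mem : K ∈ Set.Ico (1:ℝ) 2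
  ineq : ∀ x ∈ Set.Icc (0:ℝ) 1, x ≠ x0 → (x - x0) * deriv a x ≤ K * a x

/-- Hypothesis 3.1: (WD) or (SD), together with the extra monotonicity assumption
on `a(x)/|x-x0|^θ` for some `θ ∈ (0, K]`. -/
def Hyp31 (a : ℝ → ℝ) (x0 K θ : ℝ) : Prop :=
  (WeaklyDegenerate a x0 K ∨ StronglyDegenerate a x0 K) ∧
  θ ∈ Set.Ioc (0:ℝ) K ∧
  AntitoneOn (fun x => a x / |x - x0| ^ θ) (Set.Ico 0 x0) ∧
  MonotoneOn (fun x => a x / |x - x0| ^ θ) (Set.Ioc x0 1)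

/-- Membership in the weighted space `H¹_a(0,1)`.  The flag `weak` records whether we are
in the weakly degenerate case, in which case global absolute continuity on `[0,1]` is
required; in the strongly degenerate case only local absolute continuity off `x0` holds. -/
def MemH1a (a : ℝ → ℝ) (x0 : ℝ) (weak : Prop) (u : ℝ → ℝ) : Prop :=
  (weak → ACOn u 0 1) ∧
  MemLp u 2 (volume.restrict (Set.Ioo (0:ℝ) 1)) ∧
  LocACOff u x0 ∧
  MemLp (fun x => Real.sqrt (a x) * deriv u x) 2 (volume.restrict (Set.Ioo (0:ℝ) 1)) ∧
  u 0 = 0 ∧ u 1 = 0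

/-- Membership in the weighted space `H²_a(0,1) = {u ∈ H¹_a : a u' ∈ H¹(0,1)}`. -/
def MemH2a (a : ℝ → ℝ) (x0 : ℝ) (weak : Prop) (u : ℝ → ℝ) : Prop :=
  MemH1a a x0 weak u ∧
  ACOn (fun x => a x * deriv u x) 0 1 ∧
  MemLp (fun x => a x * deriv u x) 2 (volume.restrict (Set.Ioo (0:ℝ) 1)) ∧
  MemLp (deriv (fun x => a x * deriv u x)) 2 (volume.restrict (Set.Ioo (0:ℝ) 1))

/-- The time weight `Θ(t) = [t(T-t)]^{-4}`. -/
def Theta (T t : ℝ) : ℝ := 1 / (t * (T - t)) ^ 4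

/-- The space weight `ψ(x) = c1 [∫_{x0}^x (y-x0)/a(y) dy - c2]`. -/
def psiC (a : ℝ → ℝ) (x0 c1 c2 : ℝ) (x : ℝ) : ℝ :=
  c1 * ((∫ y in x0..x, (y - x0) / a y) - c2)

/-- The Carleman weight `φ(t,x) = Θ(t) ψ(x)`. -/
def phiC (a : ℝ → ℝ) (x0 T c1 c2 : ℝ) (t x : ℝ) : ℝ :=
  Theta T t * psiC a x0 c1 c2 x

/-- Partial derivative in the first (time) variable. -/
def ptd (f : ℝ → ℝ → ℝ) : ℝ → ℝ → ℝ := fun t x => deriv (fun τ => f τ x) t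

/-- Partial derivative in the second (space) variable. -/
def pxd (f : ℝ → ℝ → ℝ) : ℝ → ℝ → ℝ := fun t x => deriv (fun y => f t y) x

/-- Membership in `V = L²(0,T;H²_a(0,1)) ∩ H¹(0,T;H¹_a(0,1))`. -/
def MemV (a : ℝ → ℝ) (x0 : ℝ) (weak : Prop) (T : ℝ) (v : ℝ → ℝ → ℝ) : Prop :=
  (∀ t ∈ Set.Ioo (0:ℝ) T, MemH2a a x0 weak (v t)) ∧
  (∀ x ∈ Set.Icc (0:ℝ) 1, ∀ t ∈ Set.Ioo (0:ℝ) T, DifferentiableAt ℝ (fun τ => v τ x) t) ∧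
  (∀ t ∈ Set.Ioo (0:ℝ) T, MemH1a a x0 weak (fun x => ptd v t x)) ∧
  (∀ x ∈ Set.Icc (0:ℝ) 1, ContinuousOn (fun τ => v τ x) (Set.Icc 0 T))

/-- The operator `L⁺_s w = (a w_x)_x - s φ_t w + s² a φ_x² w`. -/
def Lplus (a : ℝ → ℝ) (φ : ℝ → ℝ → ℝ) (s : ℝ) (w : ℝ → ℝ → ℝ) : ℝ → ℝ → ℝ :=
  fun t x => pxd (fun τ y => a y * pxd w τ y) t x
    - s * ptd φ t x * w t x + s ^ 2 * a x * (pxd φ t x) ^ 2 * w t x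

/-- The operator `L⁻_s w = w_t - 2 s a φ_x w_x - s (a φ_x)_x w`. -/
def Lminus (a : ℝ → ℝ) (φ : ℝ → ℝ → ℝ) (s : ℝ) (w : ℝ → ℝ → ℝ) : ℝ → ℝ → ℝ :=
  fun t x => ptd w t x - 2 * s * a x * pxd φ t x * pxd w t x
    - s * pxd (fun τ y => a y * pxd φ τ y) t x * w t x

/-- Membership in the class `W` of solutions of the homogeneous adjoint problem with
final datum in `D(A²)`; recall `W ⊂ C¹([0,T];H²_a(0,1))`. -/
def SolW (a : ℝ → ℝ) (x0 : ℝ) (weak : Prop) (T : ℝ) (v : ℝ → ℝ → ℝ) : Prop :=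
  (∀ t ∈ Set.Ioo (0:ℝ) T, ∀ x ∈ Set.Ioo (0:ℝ) 1,
    deriv (fun τ => v τ x) t + deriv (fun y => a y * deriv (fun z => v t z) y) x = 0) ∧
  (∀ t ∈ Set.Ioo (0:ℝ) T, v t 0 = 0 ∧ v t 1 = 0) ∧
  (∀ t ∈ Set.Icc (0:ℝ) T, MemH2a a x0 weak (v t)) ∧
  (∀ x ∈ Set.Icc (0:ℝ) 1, ∀ t ∈ Set.Icc (0:ℝ) T, DifferentiableAt ℝ (fun τ => v τ x) t) ∧
  (∀ t ∈ Set.Icc (0:ℝ) T, MemH2a a x0 weak (fun x => deriv (fun τ => v τ x) t)) ∧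
  MemH2a a x0 weak (fun x => deriv (fun y => a y * deriv (fun z => v T z) y) x)

/-! The inequality `(x - x0) a' ≤ K a` says that `log a - K log |x - x0|` decreases as `x` moves
away from `x0`, so `a x / |x - x0| ^ K` is bounded below by its values at `0` and `1`. Hence
`c |x - x0| ^ K ≤ a x` for some `c > 0`, and `1 / a` is dominated by `|x - x0| ^ (-K)`, which is
integrable because `K < 1`. -/

open Real

theorem antitoneOn_div_rpow_sub_of_mul_deriv_le {f f' : ℝ → ℝ} {x₀ b K : ℝ}
    (hpos : ∀ x ∈ Ioc x₀ b, 0 < f x) (hf : ∀ x ∈ Ioc x₀ b, HasDerivAt f (f' x) x)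
    (hineq : ∀ x ∈ Ioc x₀ b, (x - x₀) * f' x ≤ K * f x) :
    AntitoneOn (fun x => f x / (x - x₀) ^ K) (Ioc x₀ b) := by
  set F : ℝ → ℝ := fun x => log (f x) - K * log (x - x₀)
  have hF : ∀ x ∈ Ioc x₀ b, HasDerivAt F (f' x / f x - K * (1 / (x - x₀))) x := fun x hx =>
    ((hf x hx).log (hpos x hx).ne').sub
      ((((hasDerivAt_id x).sub_const x₀).log (sub_pos.2 hx.1).ne').const_mul K)
  have hF_anti : AntitoneOn F (Ioc x₀ b) := by
    refine antitoneOn_of_hasDerivWithinAt_nonpos (convex_Ioc x₀ b)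
      (fun x hx => (hF x hx).continuousAt.continuousWithinAt)
      (fun x hx => (hF x (interior_subset hx)).hasDerivWithinAt) fun x hx => ?_
    have hx := interior_subset hx
    rw [mul_one_div, sub_nonpos, div_le_div_iff₀ (hpos x hx) (sub_pos.2 hx.1)]
    linarith [hineq x hx]
  have hexp : ∀ x ∈ Ioc x₀ b, f x / (x - x₀) ^ K = exp (F x) := fun x hx => by
    rw [exp_sub, exp_log (hpos x hx), rpow_def_of_pos (sub_pos.2 hx.1), mul_comm]
  intro x hx y hy hxy
  simp only [hexp x hx, hexp y hy]
  exact exp_le_exp.2 (hF_anti hx hy hxy)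

theorem intervalIntegrable_abs_sub_rpow {r : ℝ} (hr : -1 < r) (c a b : ℝ) :
    IntervalIntegrable (fun x => |x - c| ^ r) volume a b := by
  have hloc : LocallyIntegrable (fun x : ℝ => |x| ^ r) :=
    locallyIntegrable_of_norm_le_rpow (C := 1) (α := -r) (by simp) (by simp; linarith)
      (Eventually.of_forall fun x => by simp [abs_of_nonneg, rpow_nonneg])
      (continuous_abs.measurable.pow_const r).aestronglyMeasurable
  simpa using ((hloc.integrableOn_isCompact isCompact_uIcc).intervalIntegrable
    (a := a - c) (b := b - c)).comp_sub_right c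

namespace WeaklyDegenerate

variable {a : ℝ → ℝ} {x0 K : ℝ}

theorem div_rpow_le_right (ha : WeaklyDegenerate a x0 K) {x : ℝ} (hx : x ∈ Ioc x0 1) :
    a 1 / (1 - x0) ^ K ≤ a x / (x - x0) ^ K := by
  have hmem : ∀ y ∈ Ioc x0 1, y ∈ Icc (0:ℝ) 1 ∧ y ≠ x0 := fun y hy =>
    ⟨⟨ha.x0_mem.1.le.trans hy.1.le, hy.2⟩, hy.1.ne'⟩
  exact antitoneOn_div_rpow_sub_of_mul_deriv_le
    (fun y hy => ha.a_pos y (hmem y hy).1 (hmem y hy).2)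
    (fun y hy => (ha.a_diff y (hmem y hy).1 (hmem y hy).2).hasDerivAt)
    (fun y hy => ha.ineq y (hmem y hy).1 (hmem y hy).2) hx ⟨ha.x0_mem.2, le_rfl⟩ hx.2

theorem div_rpow_le_left (ha : WeaklyDegenerate a x0 K) {x : ℝ} (hx : x ∈ Ico 0 x0) :
    a 0 / x0 ^ K ≤ a x / (x0 - x) ^ K := by
  -- reflect through the origin and apply the right-hand estimate to `y ↦ a (-y)` at `-x0`
  have hmem : ∀ y ∈ Ioc (-x0) 0, -y ∈ Icc (0:ℝ) 1 ∧ -y ≠ x0 := fun y hy =>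
    ⟨⟨by linarith [hy.2], by linarith [hy.1, ha.x0_mem.2]⟩,
      (by linarith [hy.1] : -y < x0).ne⟩
  have hanti := antitoneOn_div_rpow_sub_of_mul_deriv_le (f := fun y => a (-y))
    (f' := fun y => -deriv a (-y)) (x₀ := -x0) (b := 0)
    (fun y hy => ha.a_pos _ (hmem y hy).1 (hmem y hy).2)
    (fun y hy => by
      simpa [Function.comp_def] using
        (ha.a_diff _ (hmem y hy).1 (hmem y hy).2).hasDerivAt.comp y (hasDerivAt_neg y))
    (fun y hy => by
      calc (y - -x0) * -deriv a (-y) = (-y - x0) * deriv a (-y) := by ring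
        _ ≤ K * a (-y) := ha.ineq _ (hmem y hy).1 (hmem y hy).2)
  have := hanti ⟨by linarith [hx.2], by linarith [hx.1]⟩ ⟨by linarith [ha.x0_mem.1], le_rfl⟩
    (by linarith [hx.1] : -x ≤ 0)
  simpa [neg_add_eq_sub] using this

theorem exists_mul_rpow_le (ha : WeaklyDegenerate a x0 K) :
    ∃ c > 0, ∀ x ∈ Icc (0:ℝ) 1, x ≠ x0 → c * |x - x0| ^ K ≤ a x := by
  obtain ⟨h0, h1⟩ := ha.x0_mem
  refine ⟨min (a 0 / x0 ^ K) (a 1 / (1 - x0) ^ K),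
    lt_min (div_pos (ha.a_pos 0 ⟨le_rfl, zero_le_one⟩ h0.ne) (rpow_pos_of_pos h0 K))
      (div_pos (ha.a_pos 1 ⟨zero_le_one, le_rfl⟩ h1.ne') (rpow_pos_of_pos (sub_pos.2 h1) K)),
    fun x hx hne => ?_⟩
  rcases hne.lt_or_gt with hlt | hgt
  · rw [abs_of_neg (sub_neg.2 hlt), neg_sub,
      ← le_div_iff₀ (rpow_pos_of_pos (sub_pos.2 hlt) K)]
    exact (min_le_left _ _).trans (ha.div_rpow_le_left ⟨hx.1, hlt⟩)
  · rw [abs_of_pos (sub_pos.2 hgt), ← le_div_iff₀ (rpow_pos_of_pos (sub_pos.2 hgt) K)]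
    exact (min_le_right _ _).trans (ha.div_rpow_le_right ⟨hgt, hx.2⟩)

theorem continuousOn_one_div (ha : WeaklyDegenerate a x0 K) :
    ContinuousOn (fun x => 1 / a x) (Icc 0 1 \ {x0}) := fun x hx =>
  (continuousAt_const.div (ha.a_diff x hx.1 hx.2).continuousAt
    (ha.a_pos x hx.1 hx.2).ne').continuousWithinAt

end WeaklyDegenerate

/-- Lemma 2.1(2): in the weakly degenerate case, `1/a ∈ L¹(0,1)`. -/
theorem one_div_a_integrable_weak (a : ℝ → ℝ) (x0 K : ℝ)
    (ha : WeaklyDegenerate a x0 K) :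
    MeasureTheory.IntegrableOn (fun x => 1 / a x) (Set.Ioo (0:ℝ) 1) := by
  obtain ⟨c, hc, hle⟩ := ha.exists_mul_rpow_le
  have hs : (Ioo (0:ℝ) 1 \ {x0} : Set ℝ) =ᵐ[volume] (Ioo 0 1 : Set ℝ) :=
    sdiff_null_ae_eq_self (measure_singleton x0)
  have hmeas : MeasurableSet (Ioo (0:ℝ) 1 \ {x0}) :=
    measurableSet_Ioo.diff (measurableSet_singleton x0)
  have hdom : IntegrableOn (fun x => c⁻¹ * |x - x0| ^ (-K)) (Ioo 0 1) :=
    ((intervalIntegrable_iff_integrableOn_Ioo_of_le zero_le_one).1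
      (intervalIntegrable_abs_sub_rpow (by linarith [ha.K_mem.2]) x0 0 1)).const_mul c⁻¹
  have hcont : ContinuousOn (fun x => 1 / a x) (Ioo 0 1 \ {x0}) :=
    ha.continuousOn_one_div.mono (sdiff_subset_sdiff_left Ioo_subset_Icc_self)
  rw [← integrableOn_congr_set_ae hs]
  refine Integrable.mono' (hdom.congr_set_ae hs) (hcont.aestronglyMeasurable hmeas)
    (ae_restrict_of_forall_mem hmeas fun x ⟨hx, hne⟩ => ?_)
  replace hx : x ∈ Icc (0:ℝ) 1 := Ioo_subset_Icc_self hx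
  have hd : 0 < |x - x0| := abs_pos.2 (sub_ne_zero.2 hne)
  rw [norm_of_nonneg (one_div_pos.2 (ha.a_pos x hx hne)).le, rpow_neg hd.le, ← mul_inv, one_div]
  exact inv_anti₀ (mul_pos hc (rpow_pos_of_pos hd K)) (hle x hx hne)
end
end

section
/- Assume a satisfies the strongly degenerate (SD) hypothesis with degeneracy point x0 and constant K ∈ [1,2). Then 1/√a is Lebesgue integrable on (0,1), while 1/a is not Lebesgue integrable on (0,1). -/
open MeasureTheory Set Filter

noncomputable section

/-!
Integrating `(x - x0) a' ≤ K a` shows that `a x / |x - x0| ^ K` does not increase as `x` moves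
away from `x0`, so `a ≥ c |x - x0| ^ K` on `[0, 1]` and `1 / √a ≤ C |x - x0| ^ (-K/2)`, which is
integrable because `K < 2`. Conversely, the Lipschitz bound `a ≤ L |x - x0|` gives
`1 / a ≥ |x - x0|⁻¹ / L`, and `|x - x0|⁻¹` is not integrable near `x0`.
-/

open Real

theorem intervalIntegrable_abs_rpow {r : ℝ} (hr : -1 < r) (a b : ℝ) :
    IntervalIntegrable (fun x => |x| ^ r) volume a b := by
  have from_zero : ∀ t, 0 ≤ t → IntervalIntegrable (fun x => |x| ^ r) volume 0 t := by
    intro t ht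
    refine (intervalIntegral.intervalIntegrable_rpow' hr).congr fun x hx => ?_
    rw [uIoc_of_le ht] at hx
    simp only [abs_of_pos hx.1]
  have h : ∀ t, IntervalIntegrable (fun x => |x| ^ r) volume 0 t := by
    intro t
    rcases le_total 0 t with ht | ht
    · exact from_zero t ht
    · rw [IntervalIntegrable.iff_comp_neg]
      simpa using from_zero (-t) (by linarith)
  exact (h a).symm.trans (h b)

theorem integrableOn_abs_sub_rpow {r : ℝ} (hr : -1 < r) (c a b : ℝ) :
    IntegrableOn (fun x => |x - c| ^ r) (Ioo a b) := by
  rcases le_total a b with hab | hab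
  · rw [← intervalIntegrable_iff_integrableOn_Ioo_of_le hab]
    simpa using (intervalIntegrable_abs_rpow hr (a - c) (b - c)).comp_sub_right c
  · simp [Ioo_eq_empty_of_le hab]

theorem not_integrableOn_one_div_of_le_mul_abs_sub {f : ℝ → ℝ} {a b x0 L : ℝ} (hab : a < b)
    (hx0 : x0 ∈ Icc a b) (hpos : ∀ x ∈ Ioo a b, x ≠ x0 → 0 < f x)
    (hle : ∀ x ∈ Ioo a b, f x ≤ L * |x - x0|) :
    ¬ IntegrableOn (fun x => 1 / f x) (Ioo a b) := by
  intro hf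
  have hinv : IntegrableOn (fun x => (x - x0)⁻¹) (Ioo a b) := by
    refine (hf.const_mul L).mono' (by fun_prop) ?_
    filter_upwards [ae_restrict_mem measurableSet_Ioo,
      ae_restrict_of_ae (Measure.ae_ne volume x0)] with x hx hne
    have hd : 0 < |x - x0| := abs_pos.2 (sub_ne_zero.2 hne)
    rw [norm_inv, Real.norm_eq_abs, mul_one_div, le_div_iff₀ (hpos x hx hne),
      inv_mul_le_iff₀ hd]
    exact (hle x hx).trans_eq (mul_comm _ _)
  rw [← intervalIntegrable_iff_integrableOn_Ioo_of_le hab.le, intervalIntegrable_sub_inv_iff,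
    uIcc_of_le hab.le] at hinv
  exact hinv.elim hab.ne (· hx0)

theorem le_of_sub_mul_deriv_le_of_mem_Ioc {f f' : ℝ → ℝ} {c d K : ℝ}
    (hf : ∀ x ∈ Ioc c d, HasDerivAt f (f' x) x)
    (hK : ∀ x ∈ Ioc c d, (x - c) * f' x ≤ K * f x) {x : ℝ} (hx : x ∈ Ioc c d) :
    f d / (d - c) ^ K * (x - c) ^ K ≤ f x := by
  set g : ℝ → ℝ := fun y => f y * (y - c) ^ (-K)
  have hg : ∀ y ∈ Ioc c d,
      HasDerivAt g (f' y * (y - c) ^ (-K) + f y * (1 * -K * (y - c) ^ (-K - 1))) y :=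
    fun y hy => (hf y hy).mul
      (((hasDerivAt_id y).sub_const c).rpow_const (Or.inl (sub_pos.2 hy.1).ne'))
  have hanti : AntitoneOn g (Ioc c d) := by
    refine antitoneOn_of_hasDerivWithinAt_nonpos (convex_Ioc c d)
      (fun y hy => (hg y hy).continuousAt.continuousWithinAt)
      (fun y hy => (hg y (interior_subset hy)).hasDerivWithinAt) fun y hy => ?_
    have hy := interior_subset hy
    have hyc : 0 < y - c := sub_pos.2 hy.1
    rw [rpow_sub_one hyc.ne']
    have hKy := hK y hy
    have hfactor : 0 ≤ (y - c) ^ (-K) / (y - c) := by positivity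
    calc _ = (y - c) ^ (-K) / (y - c) * ((y - c) * f' y - K * f y) := by field_simp; ring
      _ ≤ 0 := mul_nonpos_of_nonneg_of_nonpos hfactor (by linarith)
  have hxc : 0 < x - c := sub_pos.2 hx.1
  have hgx : g d ≤ g x := hanti hx (right_mem_Ioc.2 (hx.1.trans_le hx.2)) hx.2
  calc f d / (d - c) ^ K * (x - c) ^ K = g d * (x - c) ^ K := by
        simp only [g, rpow_neg (sub_pos.2 (hx.1.trans_le hx.2)).le, div_eq_mul_inv]
    _ ≤ g x * (x - c) ^ K := by gcongr
    _ = f x := by simp only [g, rpow_neg hxc.le]; field_simp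

theorem le_of_sub_mul_deriv_le_of_mem_Ico {f f' : ℝ → ℝ} {c d K : ℝ}
    (hf : ∀ x ∈ Ico c d, HasDerivAt f (f' x) x)
    (hK : ∀ x ∈ Ico c d, (x - d) * f' x ≤ K * f x) {x : ℝ} (hx : x ∈ Ico c d) :
    f c / (d - c) ^ K * (d - x) ^ K ≤ f x := by
  have hmem : ∀ {y}, y ∈ Ioc (-d) (-c) → -y ∈ Ico c d :=
    fun hy => ⟨by linarith [hy.2], by linarith [hy.1]⟩
  have := le_of_sub_mul_deriv_le_of_mem_Ioc (f := fun y => f (-y)) (f' := fun y => -f' (-y))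
    (c := -d) (d := -c) (K := K) (fun y hy => by
      simpa [Function.comp_def] using (hf (-y) (hmem hy)).comp y (hasDerivAt_neg y))
    (fun y hy => by have := hK (-y) (hmem hy); linarith)
    (x := -x) ⟨by linarith [hx.2], by linarith [hx.1]⟩
  simpa [neg_add_eq_sub] using this

theorem one_div_sqrt_le_rpow_mul_rpow {c t y K : ℝ} (hc : 0 < c) (ht : 0 < t)
    (hy : c * t ^ K ≤ y) : 1 / √y ≤ c ^ (-(1 / 2) : ℝ) * t ^ (-(K / 2)) := by
  have hct : 0 < c * t ^ K := by positivity
  calc 1 / √y = y ^ (-(1 / 2) : ℝ) := by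
        rw [sqrt_eq_rpow, rpow_neg (hct.le.trans hy), one_div]
    _ ≤ (c * t ^ K) ^ (-(1 / 2) : ℝ) := rpow_le_rpow_of_nonpos hct hy (by norm_num)
    _ = c ^ (-(1 / 2) : ℝ) * t ^ (-(K / 2)) := by
        rw [mul_rpow hc.le (by positivity), ← rpow_mul ht.le]
        ring_nf

namespace StronglyDegenerate

variable {a : ℝ → ℝ} {x0 K : ℝ}

theorem hasDerivAt (ha : StronglyDegenerate a x0 K) {x : ℝ} (hx : x ∈ Icc (0 : ℝ) 1)
    (hxx0 : x ≠ x0) : HasDerivAt a (deriv a x) x :=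
  (ha.a_diff x hx hxx0).hasDerivAt

theorem exists_pos_mul_abs_sub_rpow_le (ha : StronglyDegenerate a x0 K) :
    ∃ c > 0, ∀ x ∈ Icc (0 : ℝ) 1, c * |x - x0| ^ K ≤ a x := by
  obtain ⟨hx0, hx1⟩ := ha.x0_mem
  have hleft : ∀ x ∈ Ico 0 x0, a 0 / (x0 - 0) ^ K * (x0 - x) ^ K ≤ a x :=
    fun x hx => le_of_sub_mul_deriv_le_of_mem_Ico
      (fun y hy => ha.hasDerivAt ⟨hy.1, by linarith [hy.2]⟩ hy.2.ne)
      (fun y hy => ha.ineq y ⟨hy.1, by linarith [hy.2]⟩ hy.2.ne) hx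
  have hright : ∀ x ∈ Ioc x0 1, a 1 / (1 - x0) ^ K * (x - x0) ^ K ≤ a x :=
    fun x hx => le_of_sub_mul_deriv_le_of_mem_Ioc
      (fun y hy => ha.hasDerivAt ⟨by linarith [hy.1], hy.2⟩ hy.1.ne')
      (fun y hy => ha.ineq y ⟨by linarith [hy.1], hy.2⟩ hy.1.ne') hx
  have ha0 := ha.a_pos 0 ⟨le_rfl, zero_le_one⟩ hx0.ne
  have ha1 := ha.a_pos 1 ⟨zero_le_one, le_rfl⟩ hx1.ne'
  have hsub : (0 : ℝ) < 1 - x0 := by linarith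
  refine ⟨min (a 0 / (x0 - 0) ^ K) (a 1 / (1 - x0) ^ K), by positivity, fun x hx => ?_⟩
  rcases lt_trichotomy x x0 with hlt | rfl | hgt
  · rw [abs_of_neg (sub_neg.2 hlt), neg_sub]
    exact le_trans (by gcongr; exact min_le_left _ _) (hleft x ⟨hx.1, hlt⟩)
  · rw [sub_self, abs_zero, zero_rpow (by linarith [ha.K_mem.1]), mul_zero, ha.a_zero]
  · rw [abs_of_pos (sub_pos.2 hgt)]
    exact le_trans (by gcongr; exact min_le_right _ _) (hright x ⟨hgt, hx.2⟩)

theorem exists_le_mul_abs_sub (ha : StronglyDegenerate a x0 K) :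
    ∃ L : ℝ, ∀ x ∈ Icc (0 : ℝ) 1, a x ≤ L * |x - x0| := by
  obtain ⟨L, hL⟩ := ha.lipschitz
  refine ⟨L, fun x hx => ?_⟩
  have := hL.dist_le_mul x hx x0 ⟨ha.x0_mem.1.le, ha.x0_mem.2.le⟩
  rw [Real.dist_eq, Real.dist_eq, ha.a_zero, sub_zero] at this
  exact (le_abs_self _).trans this

theorem aestronglyMeasurable_one_div_sqrt (ha : StronglyDegenerate a x0 K) :
    AEStronglyMeasurable (fun x => 1 / √(a x)) (volume.restrict (Ioo 0 1)) := by
  obtain ⟨L, hL⟩ := ha.lipschitz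
  have hmeas : AEStronglyMeasurable a (volume.restrict (Ioo 0 1)) :=
    (hL.continuousOn.mono Ioo_subset_Icc_self).aestronglyMeasurable measurableSet_Ioo
  exact ((by fun_prop : Measurable fun t : ℝ => 1 / √t).comp_aemeasurable
    hmeas.aemeasurable).aestronglyMeasurable

end StronglyDegenerate

/-- Lemma 2.1(3): in the strongly degenerate case, `1/√a ∈ L¹(0,1)` while `1/a ∉ L¹(0,1)`. -/
theorem integrability_strong (a : ℝ → ℝ) (x0 K : ℝ)
    (ha : StronglyDegenerate a x0 K) :
    MeasureTheory.IntegrableOn (fun x => 1 / Real.sqrt (a x)) (Set.Ioo (0:ℝ) 1) ∧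
    ¬ MeasureTheory.IntegrableOn (fun x => 1 / a x) (Set.Ioo (0:ℝ) 1) := by
  constructor
  · obtain ⟨c, hc, hca⟩ := ha.exists_pos_mul_abs_sub_rpow_le
    have hdom : IntegrableOn (fun x => c ^ (-(1 / 2) : ℝ) * |x - x0| ^ (-(K / 2))) (Ioo 0 1) :=
      (integrableOn_abs_sub_rpow (by linarith [ha.K_mem.2]) x0 0 1).const_mul _
    refine hdom.mono' ha.aestronglyMeasurable_one_div_sqrt ?_
    filter_upwards [ae_restrict_mem measurableSet_Ioo] with x hx
    obtain rfl | hxx0 := eq_or_ne x x0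
    · simp only [ha.a_zero, sqrt_zero, div_zero, norm_zero]
      positivity
    rw [norm_of_nonneg (by positivity)]
    exact one_div_sqrt_le_rpow_mul_rpow hc (abs_pos.2 (sub_ne_zero.2 hxx0))
      (hca x (Ioo_subset_Icc_self hx))
  · obtain ⟨L, hL⟩ := ha.exists_le_mul_abs_sub
    exact not_integrableOn_one_div_of_le_mul_abs_sub one_pos
      ⟨ha.x0_mem.1.le, ha.x0_mem.2.le⟩
      (fun x hx => ha.a_pos x (Ioo_subset_Icc_self hx))
      (fun x hx => hL x (Ioo_subset_Icc_self hx))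
end
end

section
/- Assume a satisfies the strongly degenerate (SD) hypothesis with degeneracy point x0 and constant K. Then H¹_a(0,1) coincides with the set X of all u ∈ L²(0,1) that are locally absolutely continuous on [0,1] \ {x0}, satisfy √a u′ ∈ L²(0,1), au ∈ H¹₀(0,1), and such that au extends continuously to x0 with (au)(x0) = 0 and u(0) = u(1) = 0. In particular, for every u ∈ H¹_a(0,1) one has lim_{x→x0} a(x)u(x) = 0. -/
open MeasureTheory Set Filter

noncomputable section

/-! Write `F = a u`. Since `a` is Lipschitz and vanishes at `x0`, `|a x| ≤ L |x - x0| ≤ L`, so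
`|F'| ≤ L |u| + √L |√a u'|` and `F' ∈ L²(0,1)`. On each side of `x0` the function `F` is locally
absolutely continuous, hence a primitive of `F'` up to a constant, so it has one-sided limits
at `x0`. A nonzero limit `ℓ` would give `|u x| ≥ |ℓ| / (2 L |x - x0|)` near `x0`, which is not
integrable, contradicting `u ∈ L²(0,1) ⊆ L¹(0,1)`. Hence both limits vanish, `F = ∫₀ˣ F'` on all
of `[0,1]`, and `F` is absolutely continuous on `[0,1]`. -/

open Topology NNReal Asymptotics

section ACOn

variable {f : ℝ → ℝ} {c d : ℝ}

lemma ACOn.absolutelyContinuousOnInterval (hf : ACOn f c d) (hcd : c ≤ d) :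
    AbsolutelyContinuousOnInterval f c d := by
  rw [absolutelyContinuousOnInterval_iff]
  intro ε hε
  obtain ⟨δ, hδ, H⟩ := hf ε hε
  refine ⟨δ, hδ, fun ⟨n, I⟩ ⟨hmem, hdisj⟩ hlen => ?_⟩
  simp only [Finset.mem_range, uIcc_of_le hcd] at hmem
  have hsum (g : ℝ → ℝ → ℝ) :
      ∑ i : Fin n, g (I i).1 (I i).2 = ∑ i ∈ Finset.range n, g (I i).1 (I i).2 :=
    Fin.sum_univ_eq_sum_range (fun i => g (I i).1 (I i).2) n
  have key := H n (fun i => min (I i).1 (I i).2) (fun i => max (I i).1 (I i).2)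
    (fun i => ⟨le_min (hmem i i.2).1.1 (hmem i i.2).2.1, min_le_max,
      max_le (hmem i i.2).1.2 (hmem i i.2).2.2⟩)
    (fun i j hij => disjoint_iff_inter_eq_empty.1 <|
      (hdisj (Finset.mem_range.2 i.2) (Finset.mem_range.2 j.2)
        (Fin.val_injective.ne hij)).mono Ioo_subset_Ioc_self Ioo_subset_Ioc_self)
    (by simpa only [max_sub_min_eq_abs', ← Real.dist_eq, hsum dist] using hlen)
  calc ∑ i ∈ Finset.range n, dist (f (I i).1) (f (I i).2)
      = ∑ i : Fin n, |f (max (I i).1 (I i).2) - f (min (I i).1 (I i).2)| := by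
        rw [← hsum fun x y => dist (f x) (f y)]
        refine Finset.sum_congr rfl fun i _ => ?_
        rcases le_total (I i).1 (I i).2 with h | h
        · rw [max_eq_right h, min_eq_left h, Real.dist_eq, abs_sub_comm]
        · rw [max_eq_left h, min_eq_right h, Real.dist_eq]
    _ < ε := key

lemma AbsolutelyContinuousOnInterval.acOn (hf : AbsolutelyContinuousOnInterval f c d) :
    ACOn f c d := by
  rw [absolutelyContinuousOnInterval_iff] at hf
  intro ε hε
  obtain ⟨δ, hδ, H⟩ := hf ε hε
  refine ⟨δ, hδ, fun n cc dd hmem hdisj hlen => ?_⟩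
  let I : ℕ → ℝ × ℝ := fun k => if h : k < n then (cc ⟨k, h⟩, dd ⟨k, h⟩) else (0, 0)
  have hsum (g : ℝ → ℝ → ℝ) :
      ∑ i ∈ Finset.range n, g (I i).1 (I i).2 = ∑ i : Fin n, g (cc i) (dd i) := by
    rw [← Fin.sum_univ_eq_sum_range (fun i => g (I i).1 (I i).2) n]
    simp [I]
  have hI : (n, I) ∈ disjWithin c d := by
    refine ⟨fun k hk => ?_, fun k hk l hl hkl => ?_⟩
    · have h := hmem ⟨k, Finset.mem_range.1 hk⟩
      simp only [I, Finset.mem_range.1 hk, dite_true]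
      exact ⟨Icc_subset_uIcc ⟨h.1, h.2.1.trans h.2.2⟩, Icc_subset_uIcc ⟨h.1.trans h.2.1, h.2.2⟩⟩
    · have hk' := Finset.mem_range.1 hk
      have hl' := Finset.mem_range.1 hl
      simp only [Function.onFun, I, hk', hl', dite_true,
        uIoc_of_le (hmem _).2.1, Ioc_disjoint_Ioc, ← Ioo_disjoint_Ioo]
      exact disjoint_iff_inter_eq_empty.2 (hdisj _ _ fun h => hkl (Fin.mk.inj h))
  have hlen' : ∑ i ∈ Finset.range n, dist (I i).1 (I i).2 < δ := by
    rw [hsum dist]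
    refine lt_of_eq_of_lt (Finset.sum_congr rfl fun i _ => ?_) hlen
    rw [dist_comm, Real.dist_eq, abs_of_nonneg (sub_nonneg.2 (hmem i).2.1)]
  have hvar := H (n, I) hI hlen'
  dsimp only at hvar
  rw [hsum fun x y => dist (f x) (f y)] at hvar
  simpa only [Real.dist_eq, abs_sub_comm] using hvar

lemma ACOn.congr {g : ℝ → ℝ} (hf : ACOn f c d) (hfg : EqOn f g (Icc c d)) :
    ACOn g c d := by
  intro ε hε
  obtain ⟨δ, hδ, H⟩ := hf ε hε
  refine ⟨δ, hδ, fun n cc dd hmem hdisj hlen => ?_⟩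
  convert H n cc dd hmem hdisj hlen using 3 with i
  have hc : cc i ∈ Icc c d := ⟨(hmem i).1, (hmem i).2.1.trans (hmem i).2.2⟩
  have hd : dd i ∈ Icc c d := ⟨(hmem i).1.trans (hmem i).2.1, (hmem i).2.2⟩
  rw [hfg hc, hfg hd]

end ACOn

lemma not_integrableOn_of_sub_inv_isBigO {u : ℝ → ℝ} {c : ℝ} {s : Set ℝ} (l : Filter ℝ)
    [l.NeBot] [TendstoIxxClass Icc l l] (hl : l ≤ 𝓝[≠] c) (hs : s ∈ l)
    (hu : (fun x => (x - c)⁻¹) =O[l] u) : ¬IntegrableOn u s := by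
  have hlog : ∀ᶠ x in l, HasDerivAt (fun x => Real.log (x - c)) (x - c)⁻¹ x := by
    filter_upwards [hl self_mem_nhdsWithin] with x hx
    simpa using ((hasDerivAt_id x).sub_const c).log (sub_ne_zero.2 hx)
  have hlog_tendsto : Tendsto (fun x => ‖Real.log (x - c)‖) l atTop := by
    refine tendsto_abs_atBot_atTop.comp (Real.tendsto_log_nhdsNE_zero.comp ?_)
    rw [← sub_self c]
    exact (((hasDerivAt_id c).sub_const c).tendsto_nhdsNE one_ne_zero).mono_left hl
  exact not_integrableOn_of_tendsto_norm_atTop_of_deriv_isBigO_filter l hs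
    (hlog.mono fun x hx => hx.differentiableAt) hlog_tendsto
    (hu.congr' (hlog.mono fun x hx => hx.deriv.symm) EventuallyEq.rfl)

lemma eq_zero_of_tendsto_mul_of_integrableOn {a u : ℝ → ℝ} {c ℓ L : ℝ} {s : Set ℝ}
    (l : Filter ℝ) [l.NeBot] [TendstoIxxClass Icc l l] (hl : l ≤ 𝓝[≠] c) (hs : s ∈ l)
    (hu : IntegrableOn u s) (ha : ∀ᶠ x in l, |a x| ≤ L * |x - c|)
    (h : Tendsto (fun x => a x * u x) l (𝓝 ℓ)) : ℓ = 0 := by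
  by_contra hℓ
  have hpos : 0 < |ℓ| := abs_pos.2 hℓ
  refine not_integrableOn_of_sub_inv_isBigO l hl hs (IsBigO.of_bound (2 * L / |ℓ|) ?_) hu
  filter_upwards [hl self_mem_nhdsWithin, ha, h.abs.eventually (lt_mem_nhds (half_lt_self hpos))]
    with x hx hax hlt
  have hd : 0 < |x - c| := abs_pos.2 (sub_ne_zero.2 hx)
  rw [norm_inv, Real.norm_eq_abs, Real.norm_eq_abs, div_mul_eq_mul_div, le_div_iff₀ hpos,
    inv_mul_le_iff₀ hd]
  rw [abs_mul] at hlt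
  nlinarith [mul_le_mul_of_nonneg_right hax (abs_nonneg (u x))]

lemma abs_deriv_mul_le {a u : ℝ → ℝ} {x M : ℝ} (hax : 0 < a x) (hda : DifferentiableAt ℝ a x)
    (hda_le : |deriv a x| ≤ M) (hax_le : a x ≤ M) :
    |deriv (fun y => a y * u y) x| ≤ M * |u x| + √M * |√(a x) * deriv u x| := by
  by_cases hu : DifferentiableAt ℝ u x
  · have hsplit : |a x * deriv u x| = √(a x) * |√(a x) * deriv u x| := by
      rw [abs_mul, abs_mul, abs_of_pos hax, abs_of_nonneg (Real.sqrt_nonneg _), ← mul_assoc,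
        Real.mul_self_sqrt hax.le]
    rw [deriv_fun_mul hda hu]
    calc |deriv a x * u x + a x * deriv u x|
        ≤ |deriv a x| * |u x| + √(a x) * |√(a x) * deriv u x| := by
          rw [← abs_mul, ← hsplit]; exact abs_add_le _ _
      _ ≤ M * |u x| + √M * |√(a x) * deriv u x| := by gcongr
  -- `u = (a u) / a` near `x`, so both derivatives are the junk value `0`
  · have hnd : ¬DifferentiableAt ℝ (fun y => a y * u y) x := fun h => hu <| by
      refine (h.div hda hax.ne').congr_of_eventuallyEq ?_
      filter_upwards [hda.continuousAt.eventually_ne hax.ne'] with y hy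
      rw [Pi.div_apply, mul_div_cancel_left₀ _ hy]
    rw [deriv_zero_of_not_differentiableAt hnd, abs_zero]
    have hM : 0 ≤ M := (abs_nonneg _).trans hda_le
    positivity

lemma ACOn.integral_deriv_mul_eq_sub {a u : ℝ → ℝ} {L : ℝ≥0} {p q : ℝ} (hu : ACOn u p q)
    (ha : LipschitzOnWith L a (Icc p q)) (hpq : p ≤ q) :
    ∫ x in p..q, deriv (fun x => a x * u x) x = a q * u q - a p * u p := by
  rw [← uIcc_of_le hpq] at ha
  exact (ha.absolutelyContinuousOnInterval.fun_mul
    (hu.absolutelyContinuousOnInterval hpq)).integral_deriv_eq_sub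

lemma memLp_deriv_mul {a u : ℝ → ℝ} {s : Set ℝ} {M : ℝ}
    (hbound : ∀ᵐ x ∂volume.restrict s,
      0 < a x ∧ DifferentiableAt ℝ a x ∧ |deriv a x| ≤ M ∧ a x ≤ M)
    (hu : MemLp u 2 (volume.restrict s))
    (hau : MemLp (fun x => √(a x) * deriv u x) 2 (volume.restrict s)) :
    MemLp (deriv fun x => a x * u x) 2 (volume.restrict s) := by
  refine MemLp.of_le ((hu.norm.const_mul M).add (hau.norm.const_mul √M))
    (measurable_deriv _).aestronglyMeasurable ?_
  filter_upwards [hbound] with x ⟨hax, hda, hda_le, hax_le⟩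
  have hM : 0 ≤ M := hax.le.trans hax_le
  rw [Pi.add_apply, Real.norm_eq_abs, Real.norm_of_nonneg (by positivity)]
  exact abs_deriv_mul_le hax hda hda_le hax_le

lemma eqOn_primitive_of_tendsto_eq_zero {F f : ℝ → ℝ} {x0 : ℝ} (hx0 : x0 ∈ Ioo 0 1)
    (hf : IntervalIntegrable f volume 0 1)
    (hFTC : ∀ p q, 0 ≤ p → p ≤ q → q ≤ 1 → x0 ∉ Icc p q → ∫ x in p..q, f x = F q - F p)
    (hF0 : F 0 = 0) (hFx0 : F x0 = 0)
    (hleft : ∀ ℓ, Tendsto F (𝓝[<] x0) (𝓝 ℓ) → ℓ = 0)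
    (hright : ∀ ℓ, Tendsto F (𝓝[>] x0) (𝓝 ℓ) → ℓ = 0) :
    EqOn F (fun x => ∫ t in 0..x, f t) (Icc 0 1) := by
  set P : ℝ → ℝ := fun x => ∫ t in 0..x, f t
  have hint : ∀ x ∈ Icc (0:ℝ) 1, IntervalIntegrable f volume 0 x := fun x hx =>
    hf.mono_set (uIcc_subset_uIcc left_mem_uIcc (by rwa [uIcc_of_le zero_le_one]))
  have hPx0 : Tendsto P (𝓝 x0) (𝓝 (P x0)) := by
    have hcont := (hf.absolutelyContinuousOnInterval_intervalIntegral left_mem_uIcc).continuousOn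
    rw [uIcc_of_le zero_le_one] at hcont
    exact hcont.continuousAt (Icc_mem_nhds hx0.1 hx0.2)
  have hF_left : ∀ x ∈ Ico 0 x0, F x = P x := fun x hx => by
    show F x = ∫ t in 0..x, f t
    rw [hFTC 0 x le_rfl hx.1 (hx.2.le.trans hx0.2.le) fun h => hx.2.not_ge h.2, hF0, sub_zero]
  have hF_right : ∀ x ∈ Ioc x0 1, F x = P x + (F 1 - P 1) := fun x hx => by
    have h := hFTC x 1 (hx0.1.le.trans hx.1.le) hx.2 le_rfl fun h => hx.1.not_ge h.1
    rw [← intervalIntegral.integral_interval_sub_left (hint 1 ⟨zero_le_one, le_rfl⟩)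
      (hint x ⟨hx0.1.le.trans hx.1.le, hx.2⟩)] at h
    linarith
  have hP_zero : P x0 = 0 := hleft _ <| (hPx0.mono_left nhdsWithin_le_nhds).congr' <|
    eventuallyEq_of_mem (Ico_mem_nhdsLT hx0.1) fun x hx => (hF_left x hx).symm
  have hc_zero : F 1 - P 1 = 0 := by
    have h := hright _ <| ((hPx0.mono_left nhdsWithin_le_nhds).add_const (F 1 - P 1)).congr' <|
      eventuallyEq_of_mem (Ioc_mem_nhdsGT hx0.2) fun x hx => (hF_right x hx).symm
    rwa [hP_zero, zero_add] at h
  intro x hx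
  rcases lt_trichotomy x x0 with h | rfl | h
  · exact hF_left x ⟨hx.1, h⟩
  · rw [hFx0, hP_zero]
  · rw [hF_right x ⟨h, hx.2⟩, hc_zero, add_zero]

namespace StronglyDegenerate

variable {a u : ℝ → ℝ} {x0 K : ℝ} {weak : Prop}

lemma abs_le_mul_abs_sub (ha : StronglyDegenerate a x0 K) {L : ℝ≥0}
    (hL : LipschitzOnWith L a (Icc 0 1)) {x : ℝ} (hx : x ∈ Icc 0 1) : |a x| ≤ L * |x - x0| := by
  simpa [Real.dist_eq, ha.a_zero] using
    hL.dist_le_mul x hx x0 (Ioo_subset_Icc_self ha.x0_mem)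

lemma abs_le (ha : StronglyDegenerate a x0 K) {L : ℝ≥0}
    (hL : LipschitzOnWith L a (Icc 0 1)) {x : ℝ} (hx : x ∈ Icc 0 1) : |a x| ≤ L := by
  have h : |x - x0| ≤ 1 := abs_sub_le_iff.2 ⟨by linarith [hx.2, ha.x0_mem.1],
    by linarith [hx.1, ha.x0_mem.2]⟩
  exact (ha.abs_le_mul_abs_sub hL hx).trans (mul_le_of_le_one_right L.2 h)

lemma memLp_mul (ha : StronglyDegenerate a x0 K) (hu : MemLp u 2 (volume.restrict (Ioo 0 1))) :
    MemLp (fun x => a x * u x) 2 (volume.restrict (Ioo 0 1)) := by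
  obtain ⟨L, hL⟩ := ha.lipschitz
  refine (hu.const_mul L).of_le (((hL.continuousOn.mono Ioo_subset_Icc_self).aestronglyMeasurable
    measurableSet_Ioo).mul hu.1) ?_
  filter_upwards [ae_restrict_mem measurableSet_Ioo] with x hx
  rw [norm_mul, norm_mul]
  gcongr
  simpa only [Real.norm_eq_abs, NNReal.abs_eq] using ha.abs_le hL (Ioo_subset_Icc_self hx)

lemma memLp_deriv_mul (ha : StronglyDegenerate a x0 K) (hu : MemH1a a x0 weak u) :
    MemLp (deriv fun x => a x * u x) 2 (volume.restrict (Ioo 0 1)) := by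
  obtain ⟨L, hL⟩ := ha.lipschitz
  refine _root_.memLp_deriv_mul (M := L) ?_ hu.2.1 hu.2.2.2.1
  filter_upwards [ae_restrict_mem measurableSet_Ioo, ae_restrict_of_ae (Measure.ae_ne volume x0)]
    with x hx hne
  have hxI := Ioo_subset_Icc_self hx
  exact ⟨ha.a_pos x hxI hne, ha.a_diff x hxI hne,
    norm_deriv_le_of_lipschitzOn (Icc_mem_nhds hx.1 hx.2) hL,
    (le_abs_self _).trans (ha.abs_le hL hxI)⟩

lemma intervalIntegrable_deriv_mul (ha : StronglyDegenerate a x0 K) (hu : MemH1a a x0 weak u) :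
    IntervalIntegrable (deriv fun x => a x * u x) volume 0 1 :=
  (intervalIntegrable_iff_integrableOn_Ioo_of_le zero_le_one).2
    ((ha.memLp_deriv_mul hu).integrable one_le_two)

lemma tendsto_mul_eq_zero (ha : StronglyDegenerate a x0 K)
    (hu : MemLp u 2 (volume.restrict (Ioo 0 1)))
    (l : Filter ℝ) [l.NeBot] [TendstoIxxClass Icc l l] (hl : l ≤ 𝓝[≠] x0) (hl01 : Ioo 0 1 ∈ l)
    {ℓ : ℝ} (h : Tendsto (fun x => a x * u x) l (𝓝 ℓ)) : ℓ = 0 := by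
  obtain ⟨L, hL⟩ := ha.lipschitz
  exact eq_zero_of_tendsto_mul_of_integrableOn l hl hl01 (hu.integrable one_le_two)
    (mem_of_superset hl01 fun x hx => ha.abs_le_mul_abs_sub hL (Ioo_subset_Icc_self hx)) h

lemma eqOn_primitive (ha : StronglyDegenerate a x0 K) (hu : MemH1a a x0 weak u) :
    EqOn (fun x => a x * u x) (fun x => ∫ t in 0..x, deriv (fun y => a y * u y) t) (Icc 0 1) := by
  obtain ⟨L, hL⟩ := ha.lipschitz
  have hx0 := ha.x0_mem
  refine eqOn_primitive_of_tendsto_eq_zero hx0 (ha.intervalIntegrable_deriv_mul hu)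
    (fun p q hp hpq hq hpq0 => ?_)
    (by rw [hu.2.2.2.2.1, mul_zero]) (by rw [ha.a_zero, zero_mul])
    (fun ℓ h => ha.tendsto_mul_eq_zero hu.2.1 (𝓝[<] x0) (nhdsWithin_mono _ fun x hx => hx.ne)
      (mem_nhdsWithin_of_mem_nhds (Ioo_mem_nhds hx0.1 hx0.2)) h)
    (fun ℓ h => ha.tendsto_mul_eq_zero hu.2.1 (𝓝[>] x0) (nhdsWithin_mono _ fun x hx => hx.ne')
      (mem_nhdsWithin_of_mem_nhds (Ioo_mem_nhds hx0.1 hx0.2)) h)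
  exact (hu.2.2.1 p q hp hpq hq hpq0).integral_deriv_mul_eq_sub
    (hL.mono (Icc_subset_Icc hp hq)) hpq

lemma absolutelyContinuousOnInterval_primitive (ha : StronglyDegenerate a x0 K)
    (hu : MemH1a a x0 weak u) :
    AbsolutelyContinuousOnInterval (fun x => ∫ t in 0..x, deriv (fun y => a y * u y) t) 0 1 :=
  (ha.intervalIntegrable_deriv_mul hu).absolutelyContinuousOnInterval_intervalIntegral
    left_mem_uIcc

lemma acOn_mul (ha : StronglyDegenerate a x0 K) (hu : MemH1a a x0 weak u) :
    ACOn (fun x => a x * u x) 0 1 :=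
  (ha.absolutelyContinuousOnInterval_primitive hu).acOn.congr (ha.eqOn_primitive hu).symm

lemma tendsto_mul_nhdsNE (ha : StronglyDegenerate a x0 K) (hu : MemH1a a x0 weak u) :
    Tendsto (fun x => a x * u x) (𝓝[≠] x0) (𝓝 0) := by
  have hcont := (ha.absolutelyContinuousOnInterval_primitive hu).continuousOn
  rw [uIcc_of_le zero_le_one] at hcont
  have h := (hcont.congr (ha.eqOn_primitive hu)).continuousAt
    (Icc_mem_nhds ha.x0_mem.1 ha.x0_mem.2)
  rw [ContinuousAt, ha.a_zero, zero_mul] at h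
  exact h.mono_left nhdsWithin_le_nhds

end StronglyDegenerate

/-- Proposition 2.2: in the strongly degenerate case, `H¹_a(0,1)` coincides with the set `X`
of `u ∈ L²(0,1)`, locally absolutely continuous on `[0,1] \ {x0}`, with `√a u' ∈ L²(0,1)`,
`a u ∈ H¹₀(0,1)`, `a u` extending continuously to `x0` with value `0`, and `u(0)=u(1)=0`.
In particular, `a(x)u(x) → 0` as `x → x0` for every `u ∈ H¹_a(0,1)`. -/
theorem H1a_characterization_SD (a : ℝ → ℝ) (x0 K : ℝ)
    (ha : StronglyDegenerate a x0 K) :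
    (∀ u : ℝ → ℝ,
      MemH1a a x0 False u ↔
        (MemLp u 2 (volume.restrict (Set.Ioo (0:ℝ) 1)) ∧
         LocACOff u x0 ∧
         MemLp (fun x => Real.sqrt (a x) * deriv u x) 2 (volume.restrict (Set.Ioo (0:ℝ) 1)) ∧
         ACOn (fun x => a x * u x) 0 1 ∧
         MemLp (fun x => a x * u x) 2 (volume.restrict (Set.Ioo (0:ℝ) 1)) ∧
         MemLp (deriv (fun x => a x * u x)) 2 (volume.restrict (Set.Ioo (0:ℝ) 1)) ∧
         a 0 * u 0 = 0 ∧ a 1 * u 1 = 0 ∧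
         Filter.Tendsto (fun x => a x * u x) (nhdsWithin x0 {x0}ᶜ) (nhds 0) ∧
         u 0 = 0 ∧ u 1 = 0)) ∧
    (∀ u : ℝ → ℝ, MemH1a a x0 False u →
      Filter.Tendsto (fun x => a x * u x) (nhdsWithin x0 {x0}ᶜ) (nhds 0)) := by
  refine ⟨fun u => ⟨fun hu => ?_, ?_⟩, fun u hu => ha.tendsto_mul_nhdsNE hu⟩
  · have ⟨_, hu2, hloc, hau, hu0, hu1⟩ := hu
    exact ⟨hu2, hloc, hau, ha.acOn_mul hu, ha.memLp_mul hu2, ha.memLp_deriv_mul hu,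
      by rw [hu0, mul_zero], by rw [hu1, mul_zero], ha.tendsto_mul_nhdsNE hu, hu0, hu1⟩
  · rintro ⟨hu2, hloc, hau, -, -, -, -, -, -, hu0, hu1⟩
    exact ⟨False.elim, hu2, hloc, hau, hu0, hu1⟩
end
end

section
/- Assume Hypothesis 3.1 and let w ∈ V satisfy w(t,0)=w(t,1)=0 for t ∈ (0,T) and w(0⁺,x)=w(T⁻,x)=0 for x ∈ (0,1). Then the boundary terms ∫₀ᵀ[a w_x w_t]_{x=0}^{x=1} dt − (s/2)∫₀¹[w²φ_t]_{t=0}^{t=T} dx + (s²/2)∫₀¹[a φ_x² w²]_{t=0}^{t=T} dx + ∫₀ᵀ[−sφ_x (a w_x)² + s² a φ_t φ_x w² − s³ a² φ_x³ w²]_{x=0}^{x=1} dt + ∫₀ᵀ[−s a (aφ_x)_x w w_x]_{x=0}^{x=1} dt − (1/2)∫₀¹[a w_x²]_{t=0}^{t=T} dx reduce exactly to −s ∫₀ᵀ [ Θ (a w_x)² ψ′ ]_{x=0}^{x=1} dt. -/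
open MeasureTheory Set Filter

noncomputable section

/-- The distributed terms of `⟨L⁺_s w, L⁻_s w⟩` in Lemma 3.2. -/
def DistTerms (a : ℝ → ℝ) (φ : ℝ → ℝ → ℝ) (s T : ℝ) (w : ℝ → ℝ → ℝ) : ℝ :=
  s / 2 * (∫ t in Set.Ioo (0:ℝ) T, ∫ x in Set.Ioo (0:ℝ) 1,
      ptd (ptd φ) t x * (w t x) ^ 2)
  + s ^ 3 * (∫ t in Set.Ioo (0:ℝ) T, ∫ x in Set.Ioo (0:ℝ) 1,
      (2 * a x * pxd (pxd φ) t x + deriv a x * pxd φ t x)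
        * a x * (pxd φ t x) ^ 2 * (w t x) ^ 2)
  - 2 * s ^ 2 * (∫ t in Set.Ioo (0:ℝ) T, ∫ x in Set.Ioo (0:ℝ) 1,
      a x * pxd φ t x * pxd (ptd φ) t x * (w t x) ^ 2)
  + s * (∫ t in Set.Ioo (0:ℝ) T, ∫ x in Set.Ioo (0:ℝ) 1,
      (2 * (a x) ^ 2 * pxd (pxd φ) t x + a x * deriv a x * pxd φ t x) * (pxd w t x) ^ 2)

/-- The boundary terms of `⟨L⁺_s w, L⁻_s w⟩` in Lemma 3.2. -/
def BdryTerms (a : ℝ → ℝ) (φ : ℝ → ℝ → ℝ) (s T : ℝ) (w : ℝ → ℝ → ℝ) : ℝ :=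
  (∫ t in Set.Ioo (0:ℝ) T,
    (a 1 * pxd w t 1 * ptd w t 1 - a 0 * pxd w t 0 * ptd w t 0))
  - s / 2 * (∫ x in Set.Ioo (0:ℝ) 1,
      ((w T x) ^ 2 * ptd φ T x - (w 0 x) ^ 2 * ptd φ 0 x))
  + s ^ 2 / 2 * (∫ x in Set.Ioo (0:ℝ) 1,
      (a x * (pxd φ T x) ^ 2 * (w T x) ^ 2 - a x * (pxd φ 0 x) ^ 2 * (w 0 x) ^ 2))
  + (∫ t in Set.Ioo (0:ℝ) T,
      ((-s * pxd φ t 1 * (a 1 * pxd w t 1) ^ 2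
          + s ^ 2 * a 1 * ptd φ t 1 * pxd φ t 1 * (w t 1) ^ 2
          - s ^ 3 * (a 1) ^ 2 * (pxd φ t 1) ^ 3 * (w t 1) ^ 2)
        - (-s * pxd φ t 0 * (a 0 * pxd w t 0) ^ 2
          + s ^ 2 * a 0 * ptd φ t 0 * pxd φ t 0 * (w t 0) ^ 2
          - s ^ 3 * (a 0) ^ 2 * (pxd φ t 0) ^ 3 * (w t 0) ^ 2)))
  + (∫ t in Set.Ioo (0:ℝ) T,
      ((-s * a 1 * pxd (fun τ y => a y * pxd φ τ y) t 1 * w t 1 * pxd w t 1)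
        - (-s * a 0 * pxd (fun τ y => a y * pxd φ τ y) t 0 * w t 0 * pxd w t 0)))
  - 1 / 2 * (∫ x in Set.Ioo (0:ℝ) 1,
      (a x * (pxd w T x) ^ 2 - a x * (pxd w 0 x) ^ 2))

/-! Since `w` vanishes on the lateral sides `x = 0, 1`, so does `w_t` there, and since `w`
vanishes at `t = 0, T`, so does `w_x` there. Every boundary term then drops except
`-s φ_x (a w_x)²` at `x = 0, 1`, where `φ_x = Θ ψ'`. -/

theorem deriv_eq_zero_of_eqOn_zero {𝕜 F : Type*} [NontriviallyNormedField 𝕜]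
    [NormedAddCommGroup F] [NormedSpace 𝕜 F] {f : 𝕜 → F} {U : Set 𝕜} (hU : IsOpen U)
    (hf : EqOn f 0 U) {x : 𝕜} (hx : x ∈ U) : deriv f x = 0 := by
  rw [(hf.eventuallyEq_of_mem (hU.mem_nhds hx)).deriv_eq]
  exact deriv_const x 0

theorem ptd_eq_zero_of_eqOn_zero {w : ℝ → ℝ → ℝ} {U : Set ℝ} (hU : IsOpen U) {x : ℝ}
    (hw : ∀ t ∈ U, w t x = 0) {t : ℝ} (ht : t ∈ U) : ptd w t x = 0 :=
  deriv_eq_zero_of_eqOn_zero hU hw ht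

theorem pxd_eq_zero_of_eqOn_zero {w : ℝ → ℝ → ℝ} {U : Set ℝ} (hU : IsOpen U) {t : ℝ}
    (hw : ∀ x ∈ U, w t x = 0) {x : ℝ} (hx : x ∈ U) : pxd w t x = 0 :=
  deriv_eq_zero_of_eqOn_zero hU hw hx

theorem pxd_phiC (a : ℝ → ℝ) (x0 T c1 c2 t x : ℝ) :
    pxd (phiC a x0 T c1 c2) t x = Theta T t * deriv (psiC a x0 c1 c2) x :=
  deriv_const_mul_field _

theorem boundary_terms_reduce_general (a : ℝ → ℝ) (x0 T c1 c2 s : ℝ)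
    (w : ℝ → ℝ → ℝ)
    (hbc : ∀ t ∈ Set.Ioo (0:ℝ) T, w t 0 = 0 ∧ w t 1 = 0)
    (hw0T : ∀ x ∈ Set.Ioo (0:ℝ) 1, w 0 x = 0 ∧ w T x = 0) :
    BdryTerms a (phiC a x0 T c1 c2) s T w
      = -s * ∫ t in Set.Ioo (0:ℝ) T,
          (Theta T t * (a 1 * pxd w t 1) ^ 2 * deriv (psiC a x0 c1 c2) 1
            - Theta T t * (a 0 * pxd w t 0) ^ 2 * deriv (psiC a x0 c1 c2) 0) := by
  have hwt : ∀ t ∈ Ioo (0:ℝ) T, ptd w t 0 = 0 ∧ ptd w t 1 = 0 := fun t ht =>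
    ⟨ptd_eq_zero_of_eqOn_zero isOpen_Ioo (fun τ hτ => (hbc τ hτ).1) ht,
      ptd_eq_zero_of_eqOn_zero isOpen_Ioo (fun τ hτ => (hbc τ hτ).2) ht⟩
  have hwx : ∀ x ∈ Ioo (0:ℝ) 1, pxd w 0 x = 0 ∧ pxd w T x = 0 := fun x hx =>
    ⟨pxd_eq_zero_of_eqOn_zero isOpen_Ioo (fun y hy => (hw0T y hy).1) hx,
      pxd_eq_zero_of_eqOn_zero isOpen_Ioo (fun y hy => (hw0T y hy).2) hx⟩
  unfold BdryTerms
  rw [setIntegral_eq_zero_of_forall_eq_zero fun t ht => by simp [hwt t ht],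
    setIntegral_eq_zero_of_forall_eq_zero fun x hx => by simp [hw0T x hx],
    setIntegral_eq_zero_of_forall_eq_zero fun x hx => by simp [hw0T x hx]]
  -- occurrence 1 is now the surviving integral over the lateral sides
  nth_rw 2 [setIntegral_eq_zero_of_forall_eq_zero fun t ht => by simp [hbc t ht]]
  nth_rw 2 [setIntegral_eq_zero_of_forall_eq_zero fun x hx => by simp [hwx x hx]]
  rw [← integral_const_mul]
  simp only [mul_zero, sub_zero, add_zero, zero_add]
  refine setIntegral_congr_fun measurableSet_Ioo fun t ht => ?_
  simp only [pxd_phiC, hbc t ht]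
  ring

/-- Lemma 3.4: the boundary terms reduce to `-s ∫₀ᵀ [Θ (a w_x)² ψ']_{x=0}^{x=1} dt`. -/
theorem boundary_terms_reduce (a : ℝ → ℝ) (x0 K θ T c1 c2 s : ℝ)
    (hyp : Hyp31 a x0 K θ) (hT : 0 < T) (hc1 : 0 < c1)
    (hc2 : c2 > max ((1 - x0) ^ 2 / ((2 - K) * a 1)) (x0 ^ 2 / ((2 - K) * a 0)))
    (hs : 0 < s) (w : ℝ → ℝ → ℝ)
    (hw : MemV a x0 (WeaklyDegenerate a x0 K) T w)
    (hbc : ∀ t ∈ Set.Ioo (0:ℝ) T, w t 0 = 0 ∧ w t 1 = 0)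
    (hw0T : ∀ x ∈ Set.Ioo (0:ℝ) 1, w 0 x = 0 ∧ w T x = 0) :
    BdryTerms a (phiC a x0 T c1 c2) s T w
      = -s * ∫ t in Set.Ioo (0:ℝ) T,
          (Theta T t * (a 1 * pxd w t 1) ^ 2 * deriv (psiC a x0 c1 c2) 1
            - Theta T t * (a 0 * pxd w t 0) ^ 2 * deriv (psiC a x0 c1 c2) 0) :=
  boundary_terms_reduce_general a x0 T c1 c2 s w hbc hw0T
end
end

section
/- Assume a satisfies the weakly degenerate (WD) or strongly degenerate (SD) hypothesis with degeneracy point x0 and constant K ∈ (0,2), let c1 > 0 and c2 > max{(1−x0)²/((2−K)a(1)), x0²/((2−K)a(0))}, and set ψ(x) := c1[∫_{x0}^x (y−x0)/a(y) dy − c2]. Then −c1 c2 ≤ ψ(x) < 0 for every x ∈ [0,1]; in particular, for x > x0, ψ(x) ≤ c1[ (1−x0)²/((2−K)a(1)) − c2 ] < 0. -/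
/-!
The condition `(x - x0) a' ≤ K a` says that `a(x) / |x - x0| ^ K` is nonincreasing in the
distance `|x - x0|` on each side of `x0`. On `(x0, 1]` this gives
`(y - x0) / a y ≤ (1 - x0) ^ K / a 1 * (y - x0) ^ (1 - K)`, and since `K < 2` the right-hand
side integrates over `[x0, x]` to at most `(1 - x0)² / ((2 - K) a 1)`; the reflection
`y = x0 - t` gives `x0² / ((2 - K) a 0)` on `[0, x0)`. So `∫_{x0}^x (y - x0) / a y` lies
between `0` and a number smaller than `c2`.
-/

open MeasureTheory Set Filter

noncomputable section

theorem antitoneOn_div_rpow_of_mul_deriv_le {f : ℝ → ℝ} {K r : ℝ}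
    (hdiff : ∀ t ∈ Ioc 0 r, DifferentiableAt ℝ f t)
    (hineq : ∀ t ∈ Ioc 0 r, t * deriv f t ≤ K * f t) :
    AntitoneOn (fun t => f t / t ^ K) (Ioc 0 r) := by
  have hderiv : ∀ t ∈ Ioc 0 r, HasDerivAt (fun t => f t / t ^ K)
      ((deriv f t * t ^ K - f t * (K * t ^ (K - 1))) / (t ^ K) ^ 2) t := fun t ht =>
    (hdiff t ht).hasDerivAt.div (Real.hasDerivAt_rpow_const (Or.inl ht.1.ne'))
      (Real.rpow_pos_of_pos ht.1 K).ne'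
  refine antitoneOn_of_deriv_nonpos (convex_Ioc 0 r)
    (fun t ht => (hderiv t ht).continuousAt.continuousWithinAt) ?_ ?_ <;> rw [interior_Ioc]
  · exact fun t ht => (hderiv t (Ioo_subset_Ioc_self ht)).differentiableAt.differentiableWithinAt
  intro t ht
  have ht' := Ioo_subset_Ioc_self ht
  have hnum : deriv f t * t ^ K - f t * (K * t ^ (K - 1)) =
      t ^ (K - 1) * (t * deriv f t - K * f t) := by
    rw [Real.rpow_sub_one ht.1.ne']
    field_simp [ht.1.ne']
  rw [(hderiv t ht').deriv, hnum]
  exact div_nonpos_of_nonpos_of_nonneg (mul_nonpos_of_nonneg_of_nonpos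
    (Real.rpow_nonneg ht.1.le _) (by linarith [hineq t ht'])) (sq_nonneg _)

theorem div_le_mul_rpow_of_mul_deriv_le {f : ℝ → ℝ} {K r : ℝ}
    (hpos : ∀ t ∈ Ioc 0 r, 0 < f t)
    (hdiff : ∀ t ∈ Ioc 0 r, DifferentiableAt ℝ f t)
    (hineq : ∀ t ∈ Ioc 0 r, t * deriv f t ≤ K * f t) {t : ℝ} (ht : t ∈ Ioc 0 r) :
    t / f t ≤ r ^ K / f r * t ^ (1 - K) := by
  have hr : r ∈ Ioc 0 r := ⟨ht.1.trans_le ht.2, le_rfl⟩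
  have hmono : f r / r ^ K ≤ f t / t ^ K :=
    antitoneOn_div_rpow_of_mul_deriv_le hdiff hineq ht hr ht.2
  have hinv : t ^ K / f t ≤ r ^ K / f r := by
    simpa only [inv_div] using
      inv_anti₀ (div_pos (hpos r hr) (Real.rpow_pos_of_pos hr.1 K)) hmono
  calc t / f t = t ^ K / f t * t ^ (1 - K) := by
        rw [div_mul_eq_mul_div, ← Real.rpow_add ht.1, add_sub_cancel, Real.rpow_one]
    _ ≤ r ^ K / f r * t ^ (1 - K) := by
        gcongr
        exact Real.rpow_nonneg ht.1.le _

theorem integral_id_div_mem_Icc_of_mul_deriv_le {f : ℝ → ℝ} {K r s : ℝ} (hK : K < 2)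
    (hr : 0 < r) (hpos : ∀ t ∈ Ioc 0 r, 0 < f t)
    (hdiff : ∀ t ∈ Ioc 0 r, DifferentiableAt ℝ f t)
    (hineq : ∀ t ∈ Ioc 0 r, t * deriv f t ≤ K * f t) (hs : 0 ≤ s) (hsr : s ≤ r) :
    ∫ t in 0..s, t / f t ∈ Icc 0 (r ^ 2 / ((2 - K) * f r)) := by
  have hnonneg : ∀ t ∈ Ioc 0 s, 0 ≤ t / f t := fun t ht =>
    div_nonneg ht.1.le (hpos t ⟨ht.1, ht.2.trans hsr⟩).le
  set C := r ^ K / f r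
  have hbound : ∫ t in 0..s, t / f t ≤ ∫ t in 0..s, C * t ^ (1 - K) := by
    rw [intervalIntegral.integral_of_le hs, intervalIntegral.integral_of_le hs]
    -- only the majorant needs to be integrable, so no integrability of `t / f t` is proved
    refine integral_mono_of_nonneg ?_ ?_ ?_
    · exact (ae_restrict_iff' measurableSet_Ioc).2 (.of_forall hnonneg)
    · exact ((intervalIntegral.intervalIntegrable_rpow' (by linarith)).const_mul C).1
    · exact (ae_restrict_iff' measurableSet_Ioc).2 (.of_forall fun t ht =>
        div_le_mul_rpow_of_mul_deriv_le hpos hdiff hineq ⟨ht.1, ht.2.trans hsr⟩)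
  have hcompute : ∫ t in 0..s, C * t ^ (1 - K) = C * (s ^ (2 - K) / (2 - K)) := by
    rw [intervalIntegral.integral_const_mul, integral_rpow (Or.inl (by linarith)),
      Real.zero_rpow (by linarith), show 1 - K + 1 = 2 - K by ring, sub_zero]
  refine ⟨?_, ?_⟩
  · rw [intervalIntegral.integral_of_le hs]
    exact setIntegral_nonneg measurableSet_Ioc hnonneg
  · calc ∫ t in 0..s, t / f t ≤ C * (s ^ (2 - K) / (2 - K)) := hcompute ▸ hbound
      _ ≤ C * (r ^ (2 - K) / (2 - K)) := by
        have := hpos r ⟨hr, le_rfl⟩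
        gcongr
      _ = r ^ 2 / ((2 - K) * f r) := by
        rw [div_mul_div_comm, ← Real.rpow_add hr, add_sub_cancel, Real.rpow_two, mul_comm (f r)]

theorem integral_sub_div_mem_Icc_of_le {a : ℝ → ℝ} {x0 K x : ℝ} (hK : K < 2)
    (hx0 : 0 ≤ x0) (hx01 : x0 < 1)
    (hpos : ∀ y ∈ Icc (0:ℝ) 1, y ≠ x0 → 0 < a y)
    (hdiff : ∀ y ∈ Icc (0:ℝ) 1, y ≠ x0 → DifferentiableAt ℝ a y)
    (hineq : ∀ y ∈ Icc (0:ℝ) 1, y ≠ x0 → (y - x0) * deriv a y ≤ K * a y)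
    (hx : x0 ≤ x) (hx1 : x ≤ 1) :
    ∫ y in x0..x, (y - x0) / a y ∈ Icc 0 ((1 - x0) ^ 2 / ((2 - K) * a 1)) := by
  have hmem : ∀ t ∈ Ioc 0 (1 - x0), x0 + t ∈ Icc (0:ℝ) 1 ∧ x0 + t ≠ x0 := fun t ht =>
    ⟨⟨by linarith [ht.1], by linarith [ht.2]⟩, by linarith [ht.1]⟩
  have hshift : ∫ y in x0..x, (y - x0) / a y = ∫ t in 0..x - x0, t / a (x0 + t) := by
    simpa using (intervalIntegral.integral_comp_add_left (fun y => (y - x0) / a y) x0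
      (a := 0) (b := x - x0)).symm
  have key := integral_id_div_mem_Icc_of_mul_deriv_le (f := fun t => a (x0 + t))
    (r := 1 - x0) (s := x - x0) hK (by linarith)
    (fun t ht => hpos _ (hmem t ht).1 (hmem t ht).2)
    (fun t ht => ((hdiff _ (hmem t ht).1 (hmem t ht).2).hasDerivAt.comp_const_add x0 t
      ).differentiableAt)
    (fun t ht => by
      simpa only [deriv_comp_const_add, add_sub_cancel_left]
        using hineq _ (hmem t ht).1 (hmem t ht).2)
    (by linarith) (by linarith)
  rw [add_sub_cancel] at key
  rwa [hshift]

theorem integral_sub_div_mem_Icc_of_ge {a : ℝ → ℝ} {x0 K x : ℝ} (hK : K < 2)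
    (hx0 : 0 < x0) (hx01 : x0 ≤ 1)
    (hpos : ∀ y ∈ Icc (0:ℝ) 1, y ≠ x0 → 0 < a y)
    (hdiff : ∀ y ∈ Icc (0:ℝ) 1, y ≠ x0 → DifferentiableAt ℝ a y)
    (hineq : ∀ y ∈ Icc (0:ℝ) 1, y ≠ x0 → (y - x0) * deriv a y ≤ K * a y)
    (hx : 0 ≤ x) (hx1 : x ≤ x0) :
    ∫ y in x0..x, (y - x0) / a y ∈ Icc 0 (x0 ^ 2 / ((2 - K) * a 0)) := by
  have hmem : ∀ t ∈ Ioc 0 x0, x0 - t ∈ Icc (0:ℝ) 1 ∧ x0 - t ≠ x0 := fun t ht =>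
    ⟨⟨by linarith [ht.2], by linarith [ht.1]⟩, by linarith [ht.1]⟩
  have hreflect : ∫ y in x0..x, (y - x0) / a y = ∫ t in 0..x0 - x, t / a (x0 - t) := by
    have h := intervalIntegral.integral_comp_sub_left (fun y => (y - x0) / a y) x0
      (a := 0) (b := x0 - x)
    simp only [sub_sub_cancel, sub_zero, sub_sub_cancel_left, neg_div] at h
    rw [intervalIntegral.integral_symm, ← h, intervalIntegral.integral_neg, neg_neg]
  have hineq' : ∀ t ∈ Ioc 0 x0, t * deriv (fun t => a (x0 - t)) t ≤ K * a (x0 - t) :=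
    fun t ht => calc
      t * deriv (fun t => a (x0 - t)) t = (x0 - t - x0) * deriv a (x0 - t) := by
        rw [deriv_comp_const_sub]; ring
      _ ≤ K * a (x0 - t) := hineq _ (hmem t ht).1 (hmem t ht).2
  have key := integral_id_div_mem_Icc_of_mul_deriv_le (f := fun t => a (x0 - t))
    (r := x0) (s := x0 - x) hK hx0
    (fun t ht => hpos _ (hmem t ht).1 (hmem t ht).2)
    (fun t ht => ((hdiff _ (hmem t ht).1 (hmem t ht).2).hasDerivAt.comp_const_sub x0 t
      ).differentiableAt)
    hineq' (by linarith) (by linarith)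
  rw [sub_self] at key
  rwa [hreflect]

/-- Bounds on the weight `ψ`: `-c1 c2 ≤ ψ < 0` on `[0,1]`, and for `x > x0` the sharper
bound `ψ(x) ≤ c1[(1-x0)²/((2-K)a(1)) - c2] < 0`. -/
theorem psi_bounds (a : ℝ → ℝ) (x0 K c1 c2 : ℝ)
    (ha : WeaklyDegenerate a x0 K ∨ StronglyDegenerate a x0 K)
    (hc1 : 0 < c1)
    (hc2 : c2 > max ((1 - x0) ^ 2 / ((2 - K) * a 1)) (x0 ^ 2 / ((2 - K) * a 0))) :
    (∀ x ∈ Set.Icc (0:ℝ) 1, -(c1 * c2) ≤ psiC a x0 c1 c2 x ∧ psiC a x0 c1 c2 x < 0) ∧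
    (∀ x ∈ Set.Icc (0:ℝ) 1, x0 < x →
      psiC a x0 c1 c2 x ≤ c1 * ((1 - x0) ^ 2 / ((2 - K) * a 1) - c2) ∧
      c1 * ((1 - x0) ^ 2 / ((2 - K) * a 1) - c2) < 0) := by
  obtain ⟨⟨hx0, hx1⟩, hK, hpos, hdiff, hineq⟩ : x0 ∈ Ioo 0 1 ∧ K < 2 ∧
      (∀ x ∈ Icc (0:ℝ) 1, x ≠ x0 → 0 < a x) ∧
      (∀ x ∈ Icc (0:ℝ) 1, x ≠ x0 → DifferentiableAt ℝ a x) ∧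
      (∀ x ∈ Icc (0:ℝ) 1, x ≠ x0 → (x - x0) * deriv a x ≤ K * a x) := by
    rcases ha with h | h
    exacts [⟨h.x0_mem, by linarith [h.K_mem.2], h.a_pos, h.a_diff, h.ineq⟩,
      ⟨h.x0_mem, h.K_mem.2, h.a_pos, h.a_diff, h.ineq⟩]
  set B1 := (1 - x0) ^ 2 / ((2 - K) * a 1)
  set B0 := x0 ^ 2 / ((2 - K) * a 0)
  have hright : ∀ x ∈ Icc (0:ℝ) 1, x0 ≤ x → ∫ y in x0..x, (y - x0) / a y ∈ Icc 0 B1 :=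
    fun x hx hxx => integral_sub_div_mem_Icc_of_le hK hx0.le hx1 hpos hdiff hineq hxx hx.2
  have hbound : ∀ x ∈ Icc (0:ℝ) 1, ∫ y in x0..x, (y - x0) / a y ∈ Icc 0 (max B1 B0) := by
    intro x hx
    rcases le_total x0 x with hxx | hxx
    · exact Icc_subset_Icc_right (le_max_left _ _) (hright x hx hxx)
    · exact Icc_subset_Icc_right (le_max_right _ _)
        (integral_sub_div_mem_Icc_of_ge hK hx0 hx1.le hpos hdiff hineq hx.1 hxx)
  simp only [psiC]
  refine ⟨fun x hx => ⟨?_, ?_⟩, fun x hx hxx => ⟨?_, ?_⟩⟩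
  · linarith [mul_nonneg hc1.le (hbound x hx).1]
  · exact mul_neg_of_pos_of_neg hc1 (by linarith [(hbound x hx).2])
  · exact mul_le_mul_of_nonneg_left (by linarith [(hright x hx hxx.le).2]) hc1.le
  · exact mul_neg_of_pos_of_neg hc1 (by linarith [le_max_left B1 B0])
end
end

section
/- Assume a satisfies the weakly degenerate (WD) or strongly degenerate (SD) hypothesis with degeneracy point x0 and constant K ∈ (0,2), and set b(x) := ∫_{x0}^x (y−x0)/a(y) dy. Then for every x ∈ [0,1] with x ≠ x0 one has 0 ≤ b(x) ≤ (x−x0)²/((2−K)a(x)). -/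
open MeasureTheory Set Filter

noncomputable section

/-!
Off `x0` the inequality `(y - x0) a' y ≤ K a y` says exactly that `|y - x0| ^ K / a y` grows with
`|y - x0|`. Hence between `x0` and `x` the integrand `(y - x0) / a y` is at most
`|x - x0| ^ K / a x * |y - x0| ^ (1 - K)`, which integrates (as `K < 2`) to
`(x - x0) ^ 2 / ((2 - K) a x)`. The case `x < x0` reduces to `x0 < x` by the reflection
`y ↦ 2 x0 - y`.
-/

lemma integral_bounds_of_le_mul_rpow {f : ℝ → ℝ} {x0 x K M : ℝ} (hK : K < 2) (hx : x0 ≤ x)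
    (hf : ContinuousOn f (Ioc x0 x))
    (hbound : ∀ y ∈ Ioc x0 x, 0 ≤ f y ∧ f y ≤ M * (y - x0) ^ (1 - K)) :
    0 ≤ ∫ y in x0..x, f y ∧ ∫ y in x0..x, f y ≤ M * (x - x0) ^ (2 - K) / (2 - K) := by
  have hg : IntervalIntegrable (fun y => M * (y - x0) ^ (1 - K)) volume x0 x := by
    have hrpow := intervalIntegral.intervalIntegrable_rpow' (a := 0) (b := x - x0) (r := 1 - K)
      (by linarith)
    simpa using (hrpow.comp_sub_right x0).const_mul M
  have hfi : IntervalIntegrable f volume x0 x := by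
    refine hg.mono_fun' ?_ ?_ <;> rw [uIoc_of_le hx]
    · exact hf.aestronglyMeasurable measurableSet_Ioc
    · filter_upwards [ae_restrict_mem measurableSet_Ioc] with y hy
      rw [Real.norm_eq_abs, abs_of_nonneg (hbound y hy).1]
      exact (hbound y hy).2
  have hg_int : ∫ y in x0..x, M * (y - x0) ^ (1 - K) = M * (x - x0) ^ (2 - K) / (2 - K) := by
    rw [intervalIntegral.integral_const_mul,
      intervalIntegral.integral_comp_sub_right (fun y => y ^ (1 - K)), sub_self,
      integral_rpow (Or.inl (by linarith)), show 1 - K + 1 = 2 - K by ring,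
      Real.zero_rpow (by linarith), sub_zero, mul_div_assoc]
  constructor
  · simpa using intervalIntegral.integral_mono_on_of_le_Ioo hx intervalIntegrable_const hfi
      fun y hy => (hbound y (Ioo_subset_Ioc_self hy)).1
  · exact hg_int ▸ intervalIntegral.integral_mono_on_of_le_Ioo hx hfi hg
      fun y hy => (hbound y (Ioo_subset_Ioc_self hy)).2

section RightOfDegeneracy

variable {a a' : ℝ → ℝ} {x0 x K : ℝ}

lemma monotoneOn_sub_rpow_div (hpos : ∀ y ∈ Ioc x0 x, 0 < a y)
    (hderiv : ∀ y ∈ Ioc x0 x, HasDerivAt a (a' y) y)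
    (hineq : ∀ y ∈ Ioc x0 x, (y - x0) * a' y ≤ K * a y) :
    MonotoneOn (fun y => (y - x0) ^ K / a y) (Ioc x0 x) := by
  have hderiv' : ∀ y ∈ Ioc x0 x, HasDerivAt (fun y => (y - x0) ^ K / a y)
      ((1 * K * (y - x0) ^ (K - 1) * a y - (y - x0) ^ K * a' y) / a y ^ 2) y := fun y hy =>
    (((hasDerivAt_id y).sub_const x0).rpow_const (Or.inl (sub_ne_zero.2 hy.1.ne'))).div
      (hderiv y hy) (hpos y hy).ne'
  refine monotoneOn_of_hasDerivWithinAt_nonneg (convex_Ioc x0 x)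
    (fun y hy => (hderiv' y hy).continuousAt.continuousWithinAt)
    (fun y hy => (hderiv' y (interior_subset hy)).hasDerivWithinAt) fun y hy => ?_
  have hy : y ∈ Ioc x0 x := interior_subset hy
  have hy0 : 0 < y - x0 := sub_pos.2 hy.1
  -- the numerator is `(y - x0) ^ (K - 1) * (K * a y - (y - x0) * a' y)`
  have hsplit : (y - x0) ^ K = (y - x0) ^ (K - 1) * (y - x0) := by
    rw [← Real.rpow_add_one hy0.ne', sub_add_cancel]
  have := mul_le_mul_of_nonneg_left (hineq y hy) (Real.rpow_nonneg hy0.le (K - 1))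
  rw [hsplit]
  exact div_nonneg (by nlinarith) (sq_nonneg _)

lemma sub_div_le_mul_rpow (hpos : ∀ y ∈ Ioc x0 x, 0 < a y)
    (hderiv : ∀ y ∈ Ioc x0 x, HasDerivAt a (a' y) y)
    (hineq : ∀ y ∈ Ioc x0 x, (y - x0) * a' y ≤ K * a y) {y : ℝ} (hy : y ∈ Ioc x0 x) :
    (y - x0) / a y ≤ (x - x0) ^ K / a x * (y - x0) ^ (1 - K) := by
  have hy0 : 0 < y - x0 := sub_pos.2 hy.1
  have hx : x ∈ Ioc x0 x := ⟨hy.1.trans_le hy.2, le_rfl⟩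
  calc (y - x0) / a y = (y - x0) ^ K / a y * (y - x0) ^ (1 - K) := by
        rw [div_mul_eq_mul_div, ← Real.rpow_add hy0, add_sub_cancel, Real.rpow_one]
    _ ≤ (x - x0) ^ K / a x * (y - x0) ^ (1 - K) :=
        mul_le_mul_of_nonneg_right (monotoneOn_sub_rpow_div hpos hderiv hineq hy hx hy.2)
          (Real.rpow_nonneg hy0.le _)

theorem integral_sub_div_bounds_right (hK : K < 2) (hx : x0 < x)
    (hpos : ∀ y ∈ Ioc x0 x, 0 < a y)
    (hderiv : ∀ y ∈ Ioc x0 x, HasDerivAt a (a' y) y)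
    (hineq : ∀ y ∈ Ioc x0 x, (y - x0) * a' y ≤ K * a y) :
    0 ≤ ∫ y in x0..x, (y - x0) / a y ∧
      ∫ y in x0..x, (y - x0) / a y ≤ (x - x0) ^ 2 / ((2 - K) * a x) := by
  have hx0 : 0 < x - x0 := sub_pos.2 hx
  have hcont : ContinuousOn (fun y => (y - x0) / a y) (Ioc x0 x) := fun y hy =>
    ((continuousAt_id.sub continuousAt_const).div (hderiv y hy).continuousAt
      (hpos y hy).ne').continuousWithinAt
  have hfinal : (x - x0) ^ K / a x * (x - x0) ^ (2 - K) / (2 - K)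
      = (x - x0) ^ 2 / ((2 - K) * a x) := by
    rw [div_mul_eq_mul_div, ← Real.rpow_add hx0, add_sub_cancel, Real.rpow_two, div_div,
      mul_comm (a x)]
  rw [← hfinal]
  exact integral_bounds_of_le_mul_rpow hK hx.le hcont fun y hy =>
    ⟨div_nonneg (sub_pos.2 hy.1).le (hpos y hy).le, sub_div_le_mul_rpow hpos hderiv hineq hy⟩

end RightOfDegeneracy

lemma integral_sub_div_comp_reflect (a : ℝ → ℝ) (x0 x : ℝ) :
    ∫ y in x0..2 * x0 - x, (y - x0) / a (2 * x0 - y) = ∫ y in x0..x, (y - x0) / a y := by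
  have h := intervalIntegral.integral_comp_sub_left (a := x0) (b := 2 * x0 - x)
    (fun z => (x0 - z) / a z) (2 * x0)
  simp only [sub_sub_cancel, show 2 * x0 - x0 = x0 by ring,
    show ∀ y, x0 - (2 * x0 - y) = y - x0 from fun y => by ring] at h
  rw [h, intervalIntegral.integral_symm, ← intervalIntegral.integral_neg]
  simp only [← neg_div, neg_sub]

theorem integral_sub_div_bounds_left {a a' : ℝ → ℝ} {x0 x K : ℝ} (hK : K < 2) (hx : x < x0)
    (hpos : ∀ y ∈ Ico x x0, 0 < a y)
    (hderiv : ∀ y ∈ Ico x x0, HasDerivAt a (a' y) y)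
    (hineq : ∀ y ∈ Ico x x0, (y - x0) * a' y ≤ K * a y) :
    0 ≤ ∫ y in x0..x, (y - x0) / a y ∧
      ∫ y in x0..x, (y - x0) / a y ≤ (x - x0) ^ 2 / ((2 - K) * a x) := by
  have hmem : ∀ y ∈ Ioc x0 (2 * x0 - x), 2 * x0 - y ∈ Ico x x0 := fun y hy =>
    ⟨by linarith [hy.2], by linarith [hy.1]⟩
  have h := integral_sub_div_bounds_right (a := fun y => a (2 * x0 - y))
    (a' := fun y => -a' (2 * x0 - y)) hK (by linarith) (fun y hy => hpos _ (hmem y hy))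
    (fun y hy => (hderiv _ (hmem y hy)).comp_const_sub (2 * x0) y)
    (fun y hy => by nlinarith [hineq _ (hmem y hy)])
  rwa [integral_sub_div_comp_reflect, sub_sub_cancel, show 2 * x0 - x - x0 = -(x - x0) by ring,
    neg_sq] at h

/-- Bounds on `b(x) = ∫_{x0}^x (y-x0)/a(y) dy`: it is nonnegative and bounded by
`(x-x0)²/((2-K) a(x))` for `x ≠ x0`. -/
theorem b_bounds (a : ℝ → ℝ) (x0 K : ℝ)
    (ha : WeaklyDegenerate a x0 K ∨ StronglyDegenerate a x0 K) :
    ∀ x ∈ Set.Icc (0:ℝ) 1, x ≠ x0 →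
      0 ≤ (∫ y in x0..x, (y - x0) / a y) ∧
      (∫ y in x0..x, (y - x0) / a y) ≤ (x - x0) ^ 2 / ((2 - K) * a x) := by
  obtain ⟨hx0, hpos, hdiff, hineq, hK⟩ : x0 ∈ Ioo (0:ℝ) 1 ∧
      (∀ x ∈ Icc (0:ℝ) 1, x ≠ x0 → 0 < a x) ∧
      (∀ x ∈ Icc (0:ℝ) 1, x ≠ x0 → DifferentiableAt ℝ a x) ∧
      (∀ x ∈ Icc (0:ℝ) 1, x ≠ x0 → (x - x0) * deriv a x ≤ K * a x) ∧ K < 2 := by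
    rcases ha with h | h
    · exact ⟨h.x0_mem, h.a_pos, h.a_diff, h.ineq, by linarith [h.K_mem.2]⟩
    · exact ⟨h.x0_mem, h.a_pos, h.a_diff, h.ineq, h.K_mem.2⟩
  intro x hx hne
  rcases hne.lt_or_gt with hlt | hgt
  · have hmem : ∀ y ∈ Ico x x0, y ∈ Icc (0:ℝ) 1 ∧ y ≠ x0 := fun y hy =>
      ⟨⟨hx.1.trans hy.1, hy.2.le.trans hx0.2.le⟩, hy.2.ne⟩
    exact integral_sub_div_bounds_left hK hlt (fun y hy => hpos y (hmem y hy).1 (hmem y hy).2)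
      (fun y hy => (hdiff y (hmem y hy).1 (hmem y hy).2).hasDerivAt)
      (fun y hy => hineq y (hmem y hy).1 (hmem y hy).2)
  · have hmem : ∀ y ∈ Ioc x0 x, y ∈ Icc (0:ℝ) 1 ∧ y ≠ x0 := fun y hy =>
      ⟨⟨hx0.1.le.trans hy.1.le, hy.2.trans hx.2⟩, hy.1.ne'⟩
    exact integral_sub_div_bounds_right hK hgt (fun y hy => hpos y (hmem y hy).1 (hmem y hy).2)
      (fun y hy => (hdiff y (hmem y hy).1 (hmem y hy).2).hasDerivAt)
      (fun y hy => hineq y (hmem y hy).1 (hmem y hy).2)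
end
end
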